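/- For p = 3 and every n ≥ 1, the characteristic polynomial P_n of A_n factors as P_n = (X − 6) · ∏_{i=0}^{n−1} (F^{∘i} + 2) · ∏_{i=0}^{n−1} (F^{∘i} − 4)^{2·4^{n−i−1}}, where F = X² − 4X − 6 ∈ ℝ[X] and F^{∘i} denotes the i-fold composition of F with itself (F^{∘0} = X). -/

import Mathlib

/-!
Split a word of length `n + 1` as `0·w` or `(j+1)·w`. In these coordinates `A_{n+1}` is the block
matrix `[[0, R], [Rᵀ, 2(p-1)·I]]` with `R w (j, v) = (M_{j+1,n} + I) w v`, and since the
`M_{j,n}` are permutation matrices, `R Rᵀ = A_n + 2p·I`. Eliminating the scalar lower right block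
gives `P_{n+1} · (X - 2(p-1))^{(p+1)^n} = P_n(X(X - 2(p-1)) - 2p) · (X - 2(p-1))^{p(p+1)^n}`.
For `p = 3` this reads `P_{n+1} = (X - 4)^{2·4^n} · P_n ∘ F`, and the product formula follows by
induction from `P_0 = X - 6`.
-/

open Polynomial Matrix

/-- The action of the generator `e_i` of the star automaton group `𝒢_{S_p}` on
words of length `n` over the alphabet `X = {0, 1, …, p}`. -/
def starWord (p : ℕ) (i : Fin (p + 1)) : (n : ℕ) → (Fin n → Fin (p + 1)) → Fin n → Fin (p + 1)
  | 0, w => w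
  | n + 1, w =>
    if w 0 = 0 then Fin.cons i (starWord p i n (Fin.tail w))
    else if w 0 = i then Fin.cons 0 (Fin.tail w)
    else w

/-- The real permutation matrix of `e_i^{(n)}`. -/
noncomputable def starMat (p n : ℕ) (i : Fin (p + 1)) :
    Matrix (Fin n → Fin (p + 1)) (Fin n → Fin (p + 1)) ℝ :=
  fun u v => if starWord p i n u = v then 1 else 0

/-- The adjacency matrix `A_n = Σ_{i=1}^p (M_{i,n} + M_{i,n}ᵀ)` of the `n`-th
Schreier graph of the star automaton group `𝒢_{S_p}`. -/
noncomputable def starAdj (p n : ℕ) :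
    Matrix (Fin n → Fin (p + 1)) (Fin n → Fin (p + 1)) ℝ :=
  ∑ i : Fin p, (starMat p n i.succ + (starMat p n i.succ)ᵀ)

/-- The `i`-fold composition `F^{∘i}` of a polynomial with itself, with `F^{∘0} = X`. -/
noncomputable def polyIter (F : Polynomial ℝ) : ℕ → Polynomial ℝ
  | 0 => X
  | n + 1 => F.comp (polyIter F n)

section BlockCharpoly

variable {R : Type*} [CommRing R] {m n : Type*} [Fintype m] [Fintype n] [DecidableEq m]
  [DecidableEq n]

theorem det_fromBlocks_scalar_mul_pow (a d : R) (B : Matrix m n R) (B' : Matrix n m R) :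
    (fromBlocks (scalar m a) B B' (scalar n d)).det * d ^ Fintype.card m =
      (scalar m (a * d) - B * B').det * d ^ Fintype.card n := by
  have h : fromBlocks (scalar m a) B B' (scalar n d) * fromBlocks (scalar m d) 0 (-B') 1 =
      fromBlocks (scalar m (a * d) - B * B') B 0 (scalar n d) := by
    simp only [fromBlocks_multiply, scalar_apply, ← smul_one_eq_diagonal]
    simp [sub_eq_add_neg, mul_comm a, smul_smul]
  simpa [det_fromBlocks_zero₁₂, det_fromBlocks_zero₂₁] using congrArg det h

theorem charpoly_comp_eq_det (M : Matrix n n R) (G : R[X]) :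
    M.charpoly.comp G = (scalar n G - M.map C).det := by
  rw [charpoly, ← coe_compRingHom_apply, RingHom.map_det]
  congr 1
  ext i j
  by_cases h : i = j <;> simp [h]

theorem charpoly_add_scalar (M : Matrix n n R) (μ : R) :
    (M + scalar n μ).charpoly = M.charpoly.comp (X - C μ) := by
  simpa [sub_eq_add_neg] using charpoly_sub_scalar M (-μ)

theorem charpoly_fromBlocks_zero_scalar (B : Matrix m n R) (B' : Matrix n m R) (c : R) :
    (fromBlocks 0 B B' (scalar n c)).charpoly * (X - C c) ^ Fintype.card m =
      (B * B').charpoly.comp (X * (X - C c)) * (X - C c) ^ Fintype.card n := by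
  have hc : charmatrix (scalar n c) = scalar n (X - C c) := by
    simp [scalar_apply]
  rw [charpoly, charmatrix_fromBlocks, charmatrix_zero, hc, det_fromBlocks_scalar_mul_pow,
    charpoly_comp_eq_det, Matrix.neg_mul, Matrix.mul_neg, neg_neg, Matrix.map_mul]

end BlockCharpoly

theorem Fintype.sum_ite_eq_zero_else {ι R : Type*} [Fintype ι] [DecidableEq ι] [Ring R] (i : ι)
    (c : R) : ∑ k, (if i = k then 0 else c) = ((Fintype.card ι : R) - 1) * c := by
  have : Nonempty ι := ⟨i⟩
  simp [Finset.sum_ite, Finset.filter_ne, Finset.card_erase_of_mem, Nat.cast_sub Fintype.card_pos,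
    sub_mul]

section Star

variable {p : ℕ}

theorem starWord_cons_zero (i : Fin (p + 1)) (n : ℕ) (w : Fin n → Fin (p + 1)) :
    starWord p i (n + 1) (Fin.cons 0 w) = Fin.cons i (starWord p i n w) := by
  simp [starWord]

theorem starWord_cons_self {i : Fin (p + 1)} (hi : i ≠ 0) (n : ℕ) (w : Fin n → Fin (p + 1)) :
    starWord p i (n + 1) (Fin.cons i w) = Fin.cons 0 w := by
  simp [starWord, hi]

theorem starWord_cons_of_ne {i a : Fin (p + 1)} (ha : a ≠ 0) (hai : a ≠ i) (n : ℕ)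
    (w : Fin n → Fin (p + 1)) : starWord p i (n + 1) (Fin.cons a w) = Fin.cons a w := by
  simp [starWord, ha, hai]

theorem starWord_cons_succ (i j : Fin p) (n : ℕ) (w : Fin n → Fin (p + 1)) :
    starWord p j.succ (n + 1) (Fin.cons i.succ w) =
      if i = j then Fin.cons 0 w else Fin.cons i.succ w := by
  split_ifs with h
  · exact h ▸ starWord_cons_self (Fin.succ_ne_zero i) n w
  · exact starWord_cons_of_ne (Fin.succ_ne_zero i) (Fin.succ_injective _ |>.ne h) n w

def starWordInv (p : ℕ) (i : Fin (p + 1)) :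
    (n : ℕ) → (Fin n → Fin (p + 1)) → Fin n → Fin (p + 1)
  | 0, w => w
  | n + 1, w =>
    if w 0 = i then Fin.cons 0 (starWordInv p i n (Fin.tail w))
    else if w 0 = 0 then Fin.cons i (Fin.tail w)
    else w

theorem starWordInv_starWord {i : Fin (p + 1)} (hi : i ≠ 0) (n : ℕ)
    (w : Fin n → Fin (p + 1)) :
    starWordInv p i n (starWord p i n w) = w := by
  induction n with
  | zero => rfl
  | succ n ih =>
    induction w using Fin.consCases with | _ a w
    by_cases h0 : a = 0
    · simp [h0, starWord_cons_zero, starWordInv, ih]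
    by_cases ha : a = i
    · simp [ha, starWord_cons_self hi, starWordInv, hi.symm]
    · simp [starWord_cons_of_ne h0 ha, starWordInv, h0, ha]

theorem starWord_injective {i : Fin (p + 1)} (hi : i ≠ 0) (n : ℕ) :
    Function.Injective (starWord p i n) :=
  Function.LeftInverse.injective (starWordInv_starWord hi n)

theorem starMat_mul_transpose {i : Fin (p + 1)} (hi : i ≠ 0) (n : ℕ) :
    starMat p n i * (starMat p n i)ᵀ = 1 := by
  ext u v
  simp [starMat, mul_apply, one_apply, (starWord_injective hi n).eq_iff]

theorem starAdj_apply (n : ℕ) (u v : Fin n → Fin (p + 1)) :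
    starAdj p n u v = ∑ j : Fin p,
      ((if starWord p j.succ n u = v then 1 else 0) +
        (if starWord p j.succ n v = u then 1 else 0)) := by
  simp [starAdj, starMat, Matrix.sum_apply]

theorem starAdj_isSymm (n : ℕ) : (starAdj p n).IsSymm := by
  simp [IsSymm, starAdj, transpose_sum, add_comm]

variable (p) in
def consSumEquiv (n : ℕ) :
    (Fin n → Fin (p + 1)) ⊕ Fin p × (Fin n → Fin (p + 1)) ≃
      (Fin (n + 1) → Fin (p + 1)) where
  toFun := Sum.elim (fun w => Fin.cons 0 w) fun iw => Fin.cons iw.1.succ iw.2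
  invFun u := Fin.cases (Sum.inl (Fin.tail u)) (fun i => Sum.inr (i, Fin.tail u)) (u 0)
  left_inv x := by rcases x with w | ⟨i, w⟩ <;> simp
  right_inv u := by
    induction u using Fin.consCases with | _ a w
    induction a using Fin.cases <;> simp

theorem starAdj_cons_zero_cons_zero (n : ℕ) (w v : Fin n → Fin (p + 1)) :
    starAdj p (n + 1) (Fin.cons 0 w) (Fin.cons 0 v) = 0 := by
  simp [starAdj_apply, starWord_cons_zero, Fin.cons_inj]

variable (p) in
noncomputable def starBlock (n : ℕ) :
    Matrix (Fin n → Fin (p + 1)) (Fin p × (Fin n → Fin (p + 1))) ℝ :=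
  of fun w jv => (starMat p n jv.1.succ + 1) w jv.2

theorem starAdj_cons_zero_cons_succ (n : ℕ) (w : Fin n → Fin (p + 1)) (j : Fin p)
    (v : Fin n → Fin (p + 1)) :
    starAdj p (n + 1) (Fin.cons 0 w) (Fin.cons j.succ v) = starBlock p n w (j, v) := by
  have out : ∀ k : Fin p, (if starWord p k.succ (n + 1) (Fin.cons 0 w) = Fin.cons j.succ v
      then (1 : ℝ) else 0) = if j = k then starMat p n j.succ w v else 0 := by
    intro k
    rw [starWord_cons_zero]
    split_ifs <;> simp_all [Fin.cons_inj, starMat, eq_comm]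
  have back : ∀ k : Fin p, (if starWord p k.succ (n + 1) (Fin.cons j.succ v) = Fin.cons 0 w
      then (1 : ℝ) else 0) = if j = k then (1 : Matrix _ _ ℝ) w v else 0 := by
    intro k
    rw [starWord_cons_succ]
    split_ifs <;> simp_all [Fin.cons_inj, one_apply, eq_comm]
  simp only [starAdj_apply, out, back, Finset.sum_add_distrib, Finset.sum_ite_eq, Finset.mem_univ,
    if_true, starBlock, of_apply, Matrix.add_apply]

theorem starAdj_cons_succ_cons_succ (n : ℕ) (i : Fin p) (w : Fin n → Fin (p + 1)) (j : Fin p)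
    (v : Fin n → Fin (p + 1)) :
    starAdj p (n + 1) (Fin.cons i.succ w) (Fin.cons j.succ v) =
      if (i, w) = (j, v) then 2 * ((p : ℝ) - 1) else 0 := by
  have key : ∀ (i : Fin p) w (j : Fin p) v (k : Fin p),
      (if starWord p k.succ (n + 1) (Fin.cons i.succ w) = Fin.cons j.succ v then (1 : ℝ) else 0) =
        if i = k then 0 else if (i, w) = (j, v) then 1 else 0 := by
    intro i w j v k
    rw [starWord_cons_succ]
    split_ifs <;> simp_all [Fin.cons_inj, eq_comm]
  simp only [starAdj_apply, key, Finset.sum_add_distrib, Fintype.sum_ite_eq_zero_else,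
    Fintype.card_fin, eq_comm (a := (j, v))]
  split_ifs <;> ring

theorem reindex_starAdj_succ (n : ℕ) :
    reindex (consSumEquiv p n).symm (consSumEquiv p n).symm (starAdj p (n + 1)) =
      fromBlocks 0 (starBlock p n) (starBlock p n)ᵀ (scalar _ (2 * ((p : ℝ) - 1))) := by
  ext (w | ⟨i, w⟩) (v | ⟨j, v⟩)
  · exact starAdj_cons_zero_cons_zero n w v
  · exact starAdj_cons_zero_cons_succ n w j v
  · exact ((starAdj_isSymm _).apply _ _).trans (starAdj_cons_zero_cons_succ n v i w)
  · simp [consSumEquiv, starAdj_cons_succ_cons_succ, diagonal_apply, Prod.ext_iff]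

theorem starBlock_mul_transpose (n : ℕ) :
    starBlock p n * (starBlock p n)ᵀ = starAdj p n + scalar _ (2 * (p : ℝ)) := by
  have perm : ∀ j : Fin p, (starMat p n j.succ + 1) * (starMat p n j.succ + 1)ᵀ =
      starMat p n j.succ + (starMat p n j.succ)ᵀ + scalar _ 2 := by
    intro j
    rw [transpose_add, transpose_one, add_mul, mul_add, mul_add,
      starMat_mul_transpose (Fin.succ_ne_zero j), scalar_apply, ← smul_one_eq_diagonal, mul_one,
      one_mul, one_mul]
    module
  calc starBlock p n * (starBlock p n)ᵀ
      = ∑ j : Fin p, (starMat p n j.succ + 1) * (starMat p n j.succ + 1)ᵀ := by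
        ext w v
        simp [mul_apply, Fintype.sum_prod_type, starBlock, Matrix.sum_apply, one_apply, eq_comm]
    _ = starAdj p n + scalar _ (2 * (p : ℝ)) := by
        rw [Finset.sum_congr rfl fun j _ => perm j, Finset.sum_add_distrib, ← starAdj,
          Finset.sum_const, Finset.card_fin, ← map_nsmul, nsmul_eq_mul, mul_comm]

theorem charpoly_starAdj_zero : (starAdj p 0).charpoly = X - C (2 * (p : ℝ)) := by
  rw [charpoly, det_unique, charmatrix_apply_eq, starAdj_apply]
  simp [starWord, two_mul]

theorem charpoly_starAdj_succ (n : ℕ) :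
    (starAdj p (n + 1)).charpoly * (X - C (2 * ((p : ℝ) - 1))) ^ (p + 1) ^ n =
      (starAdj p n).charpoly.comp (X * (X - C (2 * ((p : ℝ) - 1))) - C (2 * (p : ℝ))) *
        (X - C (2 * ((p : ℝ) - 1))) ^ (p * (p + 1) ^ n) := by
  have h := charpoly_fromBlocks_zero_scalar (starBlock p n) (starBlock p n)ᵀ (2 * ((p : ℝ) - 1))
  rw [starBlock_mul_transpose, charpoly_add_scalar, comp_assoc, sub_comp, X_comp, C_comp,
    ← reindex_starAdj_succ, charpoly_reindex] at h
  simpa using h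

end Star

theorem charpoly_starAdj_three_succ (n : ℕ) :
    (starAdj 3 (n + 1)).charpoly =
      (X - C 4) ^ (2 * 4 ^ n) * (starAdj 3 n).charpoly.comp (X ^ 2 - C 4 * X - C 6) := by
  have h := charpoly_starAdj_succ (p := 3) n
  norm_num at h
  have hF : X * (X - C 4) - C 6 = (X ^ 2 - C 4 * X - C 6 : ℝ[X]) := by ring
  rw [hF, show 3 * 4 ^ n = 2 * 4 ^ n + 4 ^ n by ring, pow_add, ← mul_assoc] at h
  exact mul_right_cancel₀ (pow_ne_zero _ (X_sub_C_ne_zero 4)) (h.trans (by ring))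

theorem polyIter_succ' (F : ℝ[X]) (i : ℕ) : polyIter F (i + 1) = (polyIter F i).comp F := by
  induction i with
  | zero => simp [polyIter]
  | succ i ih =>
    show F.comp (polyIter F (i + 1)) = (F.comp (polyIter F i)).comp F
    rw [ih, comp_assoc]

theorem stmt1_general (n : ℕ) :
    (starAdj 3 n).charpoly =
      (X - C 6) *
        (∏ i ∈ Finset.range n, (polyIter (X ^ 2 - C 4 * X - C 6) i + C 2)) *
        (∏ i ∈ Finset.range n,
          (polyIter (X ^ 2 - C 4 * X - C 6) i - C 4) ^ (2 * 4 ^ (n - i - 1))) := by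
  induction n with
  | zero => norm_num [charpoly_starAdj_zero]
  | succ n ih =>
    rw [charpoly_starAdj_three_succ, ih, Finset.prod_range_succ', Finset.prod_range_succ']
    simp only [mul_comp, prod_comp, pow_comp, add_comp, sub_comp, X_comp, C_comp,
      ← polyIter_succ', Nat.add_sub_add_right, Nat.sub_zero, Nat.add_sub_cancel, polyIter.eq_1]
    simp only [map_ofNat]
    ring

/-- For `p = 3` and every `n ≥ 1`, with `F = X² − 4X − 6`:
`P_n = (X − 6) · ∏_{i=0}^{n−1} (F^{∘i} + 2) · ∏_{i=0}^{n−1} (F^{∘i} − 4)^{2·4^{n−i−1}}`. -/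
theorem stmt1 (n : ℕ) (hn : 1 ≤ n) :
    (starAdj 3 n).charpoly =
      (X - C 6) *
        (∏ i ∈ Finset.range n, (polyIter (X ^ 2 - C 4 * X - C 6) i + C 2)) *
        (∏ i ∈ Finset.range n,
          (polyIter (X ^ 2 - C 4 * X - C 6) i - C 4) ^ (2 * 4 ^ (n - i - 1))) :=
  stmt1_general n
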